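/- Let n ≥ 1 and consider the matrix of the map p ↦ [x^n, p] from the degree-j component of D/x^n D to the degree-(n+j) component, for j = -k with k ≥ 1, written in the bases {x^a ∂^{a+k} : 0 ≤ a ≤ n-1} and {x^a ∂^{a+k-n} : max(0, n-k) ≤ a ≤ n-1}. Then the square submatrix formed by the images of the last min(k,n) basis vectors is triangular with nonzero diagonal entries; hence the map is surjective. -/
import Mathlib


/-!
STATEMENT 5: For n ≥ 1, j = -k with k ≥ 1, the matrix of p ↦ [x^n, p] from the
degree-(-k) component of D/x^n D to the degree-(n-k) component, in the bases
{x^a ∂^{a+k} : 0 ≤ a ≤ n-1} and {x^a ∂^{a+k-n} : max(0,n-k) ≤ a ≤ n-1}: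
the square submatrix formed by the images of the last min(k,n) basis vectors is
triangular with nonzero diagonal entries; hence the map is surjective.
-/
/-- The defining relation of the Weyl algebra: ∂·x = x·∂ + 1. -/
inductive WeylRel : FreeAlgebra ℂ (Fin 2) → FreeAlgebra ℂ (Fin 2) → Prop
  | comm : WeylRel (FreeAlgebra.ι ℂ (1 : Fin 2) * FreeAlgebra.ι ℂ (0 : Fin 2))
      (FreeAlgebra.ι ℂ (0 : Fin 2) * FreeAlgebra.ι ℂ (1 : Fin 2) + 1)

/-- The Weyl algebra ℂ[x,∂]. -/
abbrev Weyl : Type := RingQuot WeylRel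

noncomputable def wX : Weyl := RingQuot.mkAlgHom ℂ WeylRel (FreeAlgebra.ι ℂ (0 : Fin 2))

noncomputable def wD : Weyl := RingQuot.mkAlgHom ℂ WeylRel (FreeAlgebra.ι ℂ (1 : Fin 2))

/-- The degree-`j` homogeneous component of the Weyl algebra (deg x = 1, deg ∂ = -1),
spanned by the monomials x^a ∂^b with a - b = j. -/
noncomputable def Wcomp (j : ℤ) : Submodule ℂ Weyl :=
  Submodule.span ℂ {w | ∃ a b : ℕ, (a : ℤ) - (b : ℤ) = j ∧ w = wX ^ a * wD ^ b}

/-- The left ideal x^n·D, as a ℂ-subspace of the Weyl algebra. -/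
noncomputable def WleftIdeal (n : ℕ) : Submodule ℂ Weyl :=
  LinearMap.range (LinearMap.mulLeft ℂ (wX ^ n))

lemma weyl_dx : wD * wX = wX * wD + 1 := by
  have h := RingQuot.mkAlgHom_rel ℂ WeylRel.comm
  simpa [wX, wD, map_mul, map_add, map_one] using h

lemma weyl_dxm (m : ℕ) : wD * wX ^ m = wX ^ m * wD + (m : ℂ) • wX ^ (m - 1) := by
  induction m with
  | zero => simp
  | succ m ih =>
    rw [pow_succ, ← mul_assoc, ih, add_mul, mul_assoc, weyl_dx, smul_mul_assoc]
    cases m with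
    | zero => simp
    | succ m' =>
      rw [Nat.succ_sub_one, ← pow_succ, mul_add, ← mul_assoc, ← pow_succ, mul_one,
        Nat.succ_sub_one]
      push_cast
      module

lemma weyl_djxn (j n : ℕ) :
    wD ^ j * wX ^ n = ∑ i ∈ Finset.range (j+1),
      ((j.choose i * n.descFactorial i : ℕ) : ℂ) • (wX ^ (n - i) * wD ^ (j - i)) := by
  induction j with
  | zero => simp
  | succ j ih =>
    have expand : wD ^ (j+1) * wX ^ n
        = ∑ i ∈ Finset.range (j+1), (((j.choose i * n.descFactorial i : ℕ) : ℂ) •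
            (wX ^ (n - i) * (wD * wD ^ (j - i)))
          + ((j.choose i * n.descFactorial (i+1) : ℕ) : ℂ) •
            (wX ^ (n - (i+1)) * wD ^ (j - i))) := by
      rw [pow_succ', mul_assoc, ih, Finset.mul_sum]
      refine Finset.sum_congr rfl fun i hi => ?_
      have e1 : n - i - 1 = n - (i+1) := by omega
      rw [mul_smul_comm, ← mul_assoc, weyl_dxm, add_mul, mul_assoc, smul_mul_assoc,
        smul_add, smul_smul, e1]
      congr 2
      rw [Nat.descFactorial_succ, ← Nat.cast_mul]
      norm_cast
      ring
    rw [expand, Finset.sum_add_distrib]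
    have hA : ∑ i ∈ Finset.range (j+1), ((j.choose i * n.descFactorial i : ℕ) : ℂ) •
            (wX ^ (n - i) * (wD * wD ^ (j - i)))
        = ∑ i ∈ Finset.range (j+1), ((j.choose i * n.descFactorial i : ℕ) : ℂ) •
            (wX ^ (n - i) * wD ^ (j + 1 - i)) := by
      refine Finset.sum_congr rfl fun i hi => ?_
      rw [← pow_succ']
      congr 3
      simp at hi; omega
    rw [hA]
    rw [Finset.sum_range_succ' (fun i => ((Nat.choose (j+1) i * n.descFactorial i : ℕ) : ℂ) •
          (wX ^ (n - i) * wD ^ (j + 1 - i))) (j+1)]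
    rw [Finset.sum_range_succ' (fun i => ((j.choose i * n.descFactorial i : ℕ) : ℂ) •
          (wX ^ (n - i) * wD ^ (j + 1 - i))) j]
    have hext : ∑ i ∈ Finset.range j, ((j.choose (i+1) * n.descFactorial (i+1) : ℕ) : ℂ) •
            (wX ^ (n - (i+1)) * wD ^ (j + 1 - (i+1)))
        = ∑ i ∈ Finset.range (j+1), ((j.choose (i+1) * n.descFactorial (i+1) : ℕ) : ℂ) •
            (wX ^ (n - (i+1)) * wD ^ (j + 1 - (i+1))) := by
      rw [Finset.sum_range_succ]
      simp
    rw [hext, add_right_comm, ← Finset.sum_add_distrib]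
    congr 1
    · refine Finset.sum_congr rfl fun i hi => ?_
      have h1 : j + 1 - (i+1) = j - i := by omega
      rw [h1, ← add_smul]
      congr 1
      push_cast [Nat.choose_succ_succ, Nat.descFactorial_succ, Nat.succ_eq_add_one]
      ring
    · simp

lemma mem_WleftIdeal {n m : ℕ} (h : n ≤ m) (w : Weyl) : wX ^ m * w ∈ WleftIdeal n :=
  ⟨wX ^ (m - n) * w, by
    show wX ^ n * (wX ^ (m - n) * w) = wX ^ m * w
    rw [← mul_assoc, ← pow_add]
    congr 2
    omega⟩

lemma mkQ_zero {n m : ℕ} (h : n ≤ m) (w : Weyl) :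
    (WleftIdeal n).mkQ (wX ^ m * w) = 0 := by
  rw [Submodule.mkQ_apply, Submodule.Quotient.mk_eq_zero]
  exact mem_WleftIdeal h w

/-- The matrix. -/
noncomputable def Mmat (n k : ℕ) : ℕ → ℕ → ℂ := fun a' a =>
  if a ≤ a' ∧ a' < n then -(((a+k).choose (a+n-a') * n.descFactorial (a+n-a') : ℕ) : ℂ) else 0

lemma matrix_eq (n k : ℕ) (a : ℕ) (ha1 : n - min k n ≤ a) (ha2 : a < n) :
    (WleftIdeal n).mkQ (wX ^ n * (wX ^ a * wD ^ (a + k)) - (wX ^ a * wD ^ (a + k)) * wX ^ n)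
      = ∑ a' ∈ Finset.Ico (n - min k n) n,
          Mmat n k a' a • (WleftIdeal n).mkQ (wX ^ a' * wD ^ (a' + k - n)) := by
  have hakn : n ≤ a + k := by omega
  -- expand the product
  have step1 : (wX ^ a * wD ^ (a + k)) * wX ^ n
      = ∑ i ∈ Finset.range (a + k + 1),
          (((a+k).choose i * n.descFactorial i : ℕ) : ℂ) •
            (wX ^ (a + (n - i)) * wD ^ (a + k - i)) := by
    rw [mul_assoc, weyl_djxn, Finset.mul_sum]
    refine Finset.sum_congr rfl fun i hi => ?_
    rw [mul_smul_comm, ← mul_assoc, ← pow_add]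
  rw [map_sub, step1, map_sum]
  have hz : (WleftIdeal n).mkQ (wX ^ n * (wX ^ a * wD ^ (a + k))) = 0 := by
    rw [Submodule.mkQ_apply, Submodule.Quotient.mk_eq_zero]
    exact mem_WleftIdeal le_rfl _
  rw [hz, zero_sub]
  simp only [map_smul]
  -- restrict the sum to Ioc a n
  have hres : ∑ i ∈ Finset.range (a + k + 1),
        (((a+k).choose i * n.descFactorial i : ℕ) : ℂ) •
          (WleftIdeal n).mkQ (wX ^ (a + (n - i)) * wD ^ (a + k - i))
      = ∑ i ∈ Finset.Ioc a n,
        (((a+k).choose i * n.descFactorial i : ℕ) : ℂ) •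
          (WleftIdeal n).mkQ (wX ^ (a + (n - i)) * wD ^ (a + k - i)) := by
    refine (Finset.sum_subset ?_ ?_).symm
    · intro i hi
      simp only [Finset.mem_Ioc] at hi
      simp only [Finset.mem_range]
      omega
    · intro i hi hni
      simp only [Finset.mem_range] at hi
      simp only [Finset.mem_Ioc, not_and_or, not_lt, not_le] at hni
      rcases hni with h1 | h2
      · rw [mkQ_zero (by omega : n ≤ a + (n - i)), smul_zero]
      · have : n.descFactorial i = 0 := by
          rw [Nat.descFactorial_eq_zero_iff_lt]; omega
        rw [this, Nat.mul_zero, Nat.cast_zero, zero_smul]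
  rw [hres]
  -- reindex i ↦ a + n - i
  have hbij : ∑ i ∈ Finset.Ioc a n,
        (((a+k).choose i * n.descFactorial i : ℕ) : ℂ) •
          (WleftIdeal n).mkQ (wX ^ (a + (n - i)) * wD ^ (a + k - i))
      = ∑ a' ∈ Finset.Ico a n,
        (((a+k).choose (a+n-a') * n.descFactorial (a+n-a') : ℕ) : ℂ) •
          (WleftIdeal n).mkQ (wX ^ a' * wD ^ (a' + k - n)) := by
    refine Finset.sum_nbij' (fun i => a + n - i) (fun a' => a + n - a') ?_ ?_ ?_ ?_ ?_
    · intro i hi; simp only [Finset.mem_Ioc] at hi; simp only [Finset.mem_Ico]; omega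
    · intro a' ha'; simp only [Finset.mem_Ico] at ha'; simp only [Finset.mem_Ioc]; omega
    · intro i hi; simp only [Finset.mem_Ioc] at hi; show a + n - (a + n - i) = i; omega
    · intro a' ha'; simp only [Finset.mem_Ico] at ha'; show a + n - (a + n - a') = a'; omega
    · intro i hi
      simp only [Finset.mem_Ioc] at hi
      have e1 : a + n - (a + n - i) = i := by omega
      have e2 : a + (n - i) = a + n - i := by omega
      have e3 : (a + n - i) + k - n = a + k - i := by omega
      rw [e1, e2, e3]
  rw [hbij]
  -- extend the RHS sum and identify coefficients
  rw [show ∑ a' ∈ Finset.Ico (n - min k n) n,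
        Mmat n k a' a • (WleftIdeal n).mkQ (wX ^ a' * wD ^ (a' + k - n))
      = ∑ a' ∈ Finset.Ico a n,
        Mmat n k a' a • (WleftIdeal n).mkQ (wX ^ a' * wD ^ (a' + k - n)) from
    (Finset.sum_subset (by intro x hx; simp only [Finset.mem_Ico] at *; omega)
      (by
        intro a' ha' hna'
        simp only [Finset.mem_Ico] at ha' hna'
        have : ¬ (a ≤ a' ∧ a' < n) := by omega
        rw [Mmat, if_neg this, zero_smul])).symm]
  rw [← Finset.sum_neg_distrib]
  refine Finset.sum_congr rfl fun a' ha' => ?_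
  simp only [Finset.mem_Ico] at ha'
  rw [Mmat, if_pos ⟨ha'.1, ha'.2⟩, neg_smul]

lemma Mdiag_ne (n k a : ℕ) (h2 : n - min k n ≤ a) (h3 : a < n) : Mmat n k a a ≠ 0 := by
  rw [Mmat, if_pos ⟨le_rfl, h3⟩]
  have e : a + n - a = n := by omega
  rw [e, neg_ne_zero, Ne, Nat.cast_eq_zero]
  have h1 : 0 < (a+k).choose n := Nat.choose_pos (by omega)
  have h4 : 0 < n.descFactorial n := by
    have := Nat.descFactorial_eq_zero_iff_lt (n := n) (k := n)
    omega
  positivity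

noncomputable def Tmap (n : ℕ) : Weyl →ₗ[ℂ] Weyl ⧸ WleftIdeal n :=
  (WleftIdeal n).mkQ.comp (LinearMap.mulLeft ℂ (wX ^ n) - LinearMap.mulRight ℂ (wX ^ n))

lemma Tmap_apply (n : ℕ) (p : Weyl) :
    Tmap n p = (WleftIdeal n).mkQ (wX ^ n * p - p * wX ^ n) := rfl

lemma key (n k : ℕ) : ∀ m a, n - a ≤ m → n - min k n ≤ a → a < n →
    (WleftIdeal n).mkQ (wX ^ a * wD ^ (a + k - n))
      ∈ Submodule.map (Tmap n) (Wcomp (-(k : ℤ))) := by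
  intro m
  induction m with
  | zero => intro a h1 h2 h3; omega
  | succ m ih =>
    intro a h1 h2 h3
    set S := Submodule.map (Tmap n) (Wcomp (-(k : ℤ))) with hS
    have hmem : Tmap n (wX ^ a * wD ^ (a + k)) ∈ S :=
      Submodule.mem_map_of_mem (Submodule.subset_span ⟨a, a + k, by push_cast; ring, rfl⟩)
    rw [Tmap_apply, matrix_eq n k a h2 h3] at hmem
    rw [show ∑ a' ∈ Finset.Ico (n - min k n) n,
          Mmat n k a' a • (WleftIdeal n).mkQ (wX ^ a' * wD ^ (a' + k - n))
        = ∑ a' ∈ Finset.Ico a n,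
          Mmat n k a' a • (WleftIdeal n).mkQ (wX ^ a' * wD ^ (a' + k - n)) from
      (Finset.sum_subset (by intro x hx; simp only [Finset.mem_Ico] at *; omega)
        (by
          intro a' ha' hna'
          simp only [Finset.mem_Ico] at ha' hna'
          have : ¬ (a ≤ a' ∧ a' < n) := by omega
          rw [Mmat, if_neg this, zero_smul])).symm] at hmem
    rw [Finset.sum_eq_sum_Ico_succ_bot h3] at hmem
    have htail : ∑ a' ∈ Finset.Ico (a+1) n,
        Mmat n k a' a • (WleftIdeal n).mkQ (wX ^ a' * wD ^ (a' + k - n)) ∈ S := by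
      refine Submodule.sum_mem _ fun a' ha' => Submodule.smul_mem _ _ ?_
      simp only [Finset.mem_Ico] at ha'
      exact ih a' (by omega) (by omega) ha'.2
    have hdiag : Mmat n k a a • (WleftIdeal n).mkQ (wX ^ a * wD ^ (a + k - n)) ∈ S := by
      have := Submodule.sub_mem S hmem htail
      simpa using this
    have hd := Mdiag_ne n k a h2 h3
    have := Submodule.smul_mem S (Mmat n k a a)⁻¹ hdiag
    rwa [smul_smul, inv_mul_cancel₀ hd, one_smul] at this



theorem stmt5 (n k : ℕ) (hn : 1 ≤ n) (hk : 1 ≤ k) :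
    ∃ M : ℕ → ℕ → ℂ,
      -- the images of the last min(k,n) source basis vectors, i.e. those
      -- x^a ∂^{a+k} with n - min k n ≤ a < n, expressed in the target basis
      (∀ a ∈ Finset.Ico (n - min k n) n,
        (WleftIdeal n).mkQ (wX ^ n * (wX ^ a * wD ^ (a + k)) - (wX ^ a * wD ^ (a + k)) * wX ^ n)
          = ∑ a' ∈ Finset.Ico (n - min k n) n,
              M a' a • (WleftIdeal n).mkQ (wX ^ a' * wD ^ (a' + k - n))) ∧
      -- this square submatrix is triangular …
      (∀ a' a : ℕ, a' < a → M a' a = 0) ∧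
      -- … with nonzero diagonal entries
      (∀ a ∈ Finset.Ico (n - min k n) n, M a a ≠ 0) ∧
      -- hence the induced map on the degree-(-k) component is surjective
      (∀ q ∈ Submodule.map (WleftIdeal n).mkQ (Wcomp ((n : ℤ) - (k : ℤ))),
        ∃ p ∈ Wcomp (-(k : ℤ)),
          (WleftIdeal n).mkQ (wX ^ n * p - p * wX ^ n) = q) := by
  refine ⟨Mmat n k, ?_, ?_, ?_, ?_⟩
  · intro a ha
    simp only [Finset.mem_Ico] at ha
    exact matrix_eq n k a ha.1 ha.2
  · intro a' a h
    rw [Mmat, if_neg (by omega)]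
  · intro a ha
    simp only [Finset.mem_Ico] at ha
    exact Mdiag_ne n k a ha.1 ha.2
  · intro q hq
    have hle : Submodule.map (WleftIdeal n).mkQ (Wcomp ((n : ℤ) - (k : ℤ)))
        ≤ Submodule.map (Tmap n) (Wcomp (-(k : ℤ))) := by
      rw [Wcomp, Submodule.map_span, Submodule.span_le]
      rintro _ ⟨w, ⟨a, b, hab, rfl⟩, rfl⟩
      by_cases hna : n ≤ a
      · have hz : (WleftIdeal n).mkQ (wX ^ a * wD ^ b) = 0 := mkQ_zero hna _
        rw [hz]
        exact zero_mem _
      · have hb : b = a + k - n := by omega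
        have h2 : n - min k n ≤ a := by omega
        subst hb
        exact key n k (n - a) a le_rfl h2 (by omega)
    obtain ⟨p, hp, hTp⟩ := hle hq
    exact ⟨p, hp, by rw [← Tmap_apply]; exact hTp⟩
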